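/- Suppose a real-valued function R_min on a time interval satisfies, at every regular time, the differential inequality dR_min/dt ≥ (2/3) R_min², and at each singular time t₀, R_min(t₀⁺) ≥ R_min(t₀). If R_min(0) ≥ c > 0, then R_min(t) ≥ c/(1 − (2/3) c t) for t < 3/(2c); in particular the solution cannot exist (with finite curvature) beyond time 3/(2c), so a surgical solution with uniformly positive initial scalar curvature becomes extinct in finite time. -/
import Mathlib

open Set Filter

/-- Core interval comparison: on an interval with no singular times, if the bound
holds at the left endpoint, it propagates to the right endpoint. -/
private lemma stmt_11_interval (c a t : ℝ) (f f' : ℝ → ℝ) (hc : 0 < c) (hat : a ≤ t)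
    (hcontA : ContinuousWithinAt f (Set.Ici a) a)
    (hder : ∀ x ∈ Set.Ioc a t, HasDerivAt f (f' x) x ∧ f' x ≥ 2 / 3 * (f x) ^ 2)
    (hfa : c ≤ f a) (hga : (f a)⁻¹ + 2 / 3 * a ≤ 1 / c) :
    c ≤ f t ∧ (f t)⁻¹ + 2 / 3 * t ≤ 1 / c := by
  rcases eq_or_lt_of_le hat with rfl | hat'
  · exact ⟨hfa, hga⟩
  have hcont : ContinuousOn f (Set.Icc a t) := by
    intro x hx
    rcases eq_or_lt_of_le hx.1 with rfl | hax
    · exact hcontA.mono (fun y hy => hy.1)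
    · exact ((hder x ⟨hax, hx.2⟩).1.continuousAt).continuousWithinAt
  have hmono : MonotoneOn f (Set.Icc a t) := by
    apply monotoneOn_of_deriv_nonneg (convex_Icc a t) hcont
    · intro x hx
      rw [interior_Icc] at hx
      exact ((hder x ⟨hx.1, hx.2.le⟩).1.differentiableAt).differentiableWithinAt
    · intro x hx
      rw [interior_Icc] at hx
      have h := hder x ⟨hx.1, hx.2.le⟩
      rw [h.1.deriv]
      nlinarith [h.2, sq_nonneg (f x)]
  have hfc : ∀ x ∈ Set.Icc a t, c ≤ f x := fun x hx =>
    hfa.trans (hmono (Set.left_mem_Icc.2 hat) hx hx.1)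
  have hft : c ≤ f t := hfc t (Set.right_mem_Icc.2 hat)
  set g : ℝ → ℝ := fun x => (f x)⁻¹ + 2 / 3 * x with hg
  have hgder : ∀ x ∈ Set.Ioo a t, HasDerivAt g (-f' x / (f x) ^ 2 + 2 / 3) x := by
    intro x hx
    have hne : f x ≠ 0 := ne_of_gt (lt_of_lt_of_le hc (hfc x ⟨hx.1.le, hx.2.le⟩))
    have h1 := (hder x ⟨hx.1, hx.2.le⟩).1.inv hne
    have h2 : HasDerivAt (fun y : ℝ => 2 / 3 * y) (2 / 3) x := by
      simpa using (hasDerivAt_id x).const_mul (2 / 3 : ℝ)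
    exact h1.add h2
  have hgcont : ContinuousOn g (Set.Icc a t) :=
    (hcont.inv₀ fun x hx => ne_of_gt (lt_of_lt_of_le hc (hfc x hx))).add
      ((continuous_const.mul continuous_id).continuousOn)
  have hganti : AntitoneOn g (Set.Icc a t) := by
    apply antitoneOn_of_deriv_nonpos (convex_Icc a t) hgcont
    · intro x hx; rw [interior_Icc] at hx
      exact (hgder x hx).differentiableAt.differentiableWithinAt
    · intro x hx; rw [interior_Icc] at hx
      rw [(hgder x hx).deriv]
      have hfx : c ≤ f x := hfc x ⟨hx.1.le, hx.2.le⟩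
      have hsq : 0 < (f x) ^ 2 := pow_pos (lt_of_lt_of_le hc hfx) 2
      have h2 := (hder x ⟨hx.1, hx.2.le⟩).2
      have hdiv : 2 / 3 ≤ f' x / (f x) ^ 2 := (le_div_iff₀ hsq).2 (by linarith)
      have hnd : -f' x / (f x) ^ 2 = -(f' x / (f x) ^ 2) := neg_div _ _
      linarith
  have := hganti (Set.left_mem_Icc.2 hat) (Set.right_mem_Icc.2 hat) hat
  exact ⟨hft, le_trans this hga⟩

/-- Across a singular time the bound survives since the jump is upward. -/
private lemma stmt_11_jump (c a : ℝ) (f : ℝ → ℝ) (hc : 0 < c) (ha : 0 < a)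
    (l : ℝ) (hl : Filter.Tendsto f (nhdsWithin a (Set.Iio a)) (nhds l)) (hlf : l ≤ f a)
    (hprev : ∀ s ∈ Set.Ioo 0 a, c ≤ f s ∧ (f s)⁻¹ + 2 / 3 * s ≤ 1 / c) :
    c ≤ f a ∧ (f a)⁻¹ + 2 / 3 * a ≤ 1 / c := by
  have hmem : Set.Ioo 0 a ∈ nhdsWithin a (Set.Iio a) := Ioo_mem_nhdsLT ha
  have hcl : c ≤ l :=
    ge_of_tendsto hl (Filter.eventually_of_mem hmem fun s hs => (hprev s hs).1)
  have hlpos : 0 < l := lt_of_lt_of_le hc hcl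
  have htend : Filter.Tendsto (fun s => (f s)⁻¹ + 2 / 3 * s) (nhdsWithin a (Set.Iio a))
      (nhds (l⁻¹ + 2 / 3 * a)) :=
    (hl.inv₀ (ne_of_gt hlpos)).add
      (((continuous_const.mul continuous_id).tendsto a).mono_left nhdsWithin_le_nhds)
  have hglea : l⁻¹ + 2 / 3 * a ≤ 1 / c :=
    le_of_tendsto htend (Filter.eventually_of_mem hmem fun s hs => (hprev s hs).2)
  have hinv : (f a)⁻¹ ≤ l⁻¹ := inv_anti₀ hlpos hlf
  exact ⟨hcl.trans hlf, by linarith⟩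

/-- If R_min satisfies dR_min/dt ≥ (2/3)R_min² at regular times, jumps only upward at
the (finitely many in bounded time) singular times, and R_min(0) ≥ c > 0, then
R_min(t) ≥ c/(1 − (2/3)ct) for t < 3/(2c); in particular the solution, having finite
curvature, cannot exist beyond time 3/(2c). -/
theorem stmt_11 (b c : ℝ) (hb : 0 < b) (hc : 0 < c)
    (f f' : ℝ → ℝ) (S : Set ℝ) (hSfin : S.Finite)
    (hreg : ∀ t ∈ Set.Ico 0 b, t ∉ S →
      HasDerivAt f (f' t) t ∧ f' t ≥ 2 / 3 * (f t) ^ 2)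
    (hrightcont : ∀ t ∈ Set.Ico 0 b, ContinuousWithinAt f (Set.Ici t) t)
    (hsing : ∀ t₀ ∈ S ∩ Set.Ioo 0 b, ∃ l : ℝ,
      Filter.Tendsto f (nhdsWithin t₀ (Set.Iio t₀)) (nhds l) ∧ l ≤ f t₀)
    (h0 : c ≤ f 0) :
    (∀ t ∈ Set.Ico 0 b, t < 3 / (2 * c) → f t ≥ c / (1 - 2 / 3 * c * t)) ∧
    (∀ M : ℝ, (∀ t ∈ Set.Ico 0 b, f t ≤ M) → b ≤ 3 / (2 * c)) := by
  classical
  have key : ∀ n : ℕ, ∀ t, 0 ≤ t → t < b →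
      (hSfin.toFinset.filter (fun x => 0 < x ∧ x ≤ t)).card ≤ n →
      c ≤ f t ∧ (f t)⁻¹ + 2 / 3 * t ≤ 1 / c := by
    intro n
    induction n with
    | zero =>
      intro t ht0 htb hcard
      have hempty : ∀ x ∈ S, ¬(0 < x ∧ x ≤ t) := by
        intro x hx hx2
        have hmem : x ∈ hSfin.toFinset.filter (fun x => 0 < x ∧ x ≤ t) :=
          Finset.mem_filter.2 ⟨hSfin.mem_toFinset.2 hx, hx2⟩
        have := Finset.card_pos.2 ⟨x, hmem⟩
        omega
      apply stmt_11_interval c 0 t f f' hc ht0 (hrightcont 0 ⟨le_refl 0, hb⟩) ?_ h0 ?_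
      · intro x hx
        exact hreg x ⟨hx.1.le, lt_of_le_of_lt hx.2 htb⟩
          (fun hxS => hempty x hxS ⟨hx.1, hx.2⟩)
      · have h1 : (f 0)⁻¹ ≤ c⁻¹ := inv_anti₀ hc h0
        rw [one_div]
        linarith
    | succ n ih =>
      intro t ht0 htb hcard
      by_cases hF : (hSfin.toFinset.filter (fun x => 0 < x ∧ x ≤ t)).Nonempty
      · set F := hSfin.toFinset.filter (fun x => 0 < x ∧ x ≤ t) with hFdef
        set a := F.max' hF with hadef
        have haF : a ∈ F := F.max'_mem hF
        have haF' := Finset.mem_filter.1 haF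
        have haS : a ∈ S := hSfin.mem_toFinset.1 haF'.1
        have ha0 : 0 < a := haF'.2.1
        have hat : a ≤ t := haF'.2.2
        have hab : a < b := lt_of_le_of_lt hat htb
        have hMa : c ≤ f a ∧ (f a)⁻¹ + 2 / 3 * a ≤ 1 / c := by
          obtain ⟨l, hl, hlf⟩ := hsing a ⟨haS, ha0, hab⟩
          apply stmt_11_jump c a f hc ha0 l hl hlf
          intro s hs
          apply ih s hs.1.le (lt_trans (lt_of_lt_of_le hs.2 hat) htb)
          have hsub : hSfin.toFinset.filter (fun x => 0 < x ∧ x ≤ s) ⊆ F.erase a := by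
            intro x hx
            have hx' := Finset.mem_filter.1 hx
            refine Finset.mem_erase.2 ⟨ne_of_lt (lt_of_le_of_lt hx'.2.2 hs.2), ?_⟩
            exact Finset.mem_filter.2 ⟨hx'.1, hx'.2.1, le_trans hx'.2.2 (le_trans hs.2.le hat)⟩
          have h1 := Finset.card_le_card hsub
          have h2 := Finset.card_erase_of_mem haF
          omega
        apply stmt_11_interval c a t f f' hc hat (hrightcont a ⟨ha0.le, hab⟩) ?_ hMa.1 hMa.2
        intro x hx
        apply hreg x ⟨le_trans ha0.le hx.1.le, lt_of_le_of_lt hx.2 htb⟩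
        intro hxS
        have hxF : x ∈ F :=
          Finset.mem_filter.2 ⟨hSfin.mem_toFinset.2 hxS, lt_trans ha0 hx.1, hx.2⟩
        exact absurd (F.le_max' x hxF) (not_le.2 hx.1)
      · exact ih t ht0 htb (by
          rw [Finset.not_nonempty_iff_eq_empty] at hF
          simp [hF])
  have master : ∀ t, 0 ≤ t → t < b → c ≤ f t ∧ (f t)⁻¹ + 2 / 3 * t ≤ 1 / c :=
    fun t h1 h2 => key _ t h1 h2 le_rfl
  constructor
  · rintro t ⟨ht0, htb⟩ htc
    obtain ⟨h1, h2⟩ := master t ht0 htb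
    have hd : 0 < 1 / c - 2 / 3 * t := by
      have ha : 2 / 3 * t < 2 / 3 * (3 / (2 * c)) := by
        apply mul_lt_mul_of_pos_left htc
        norm_num
      have hb2 : 2 / 3 * (3 / (2 * c)) = 1 / c := by
        field_simp
      linarith
    have hft : 0 < f t := lt_of_lt_of_le hc h1
    have hinv : (f t)⁻¹ ≤ 1 / c - 2 / 3 * t := by linarith
    have hle : (1 / c - 2 / 3 * t)⁻¹ ≤ f t := by
      have := inv_anti₀ (inv_pos.2 hft) hinv
      rwa [inv_inv] at this
    have hne : (1 - 2 / 3 * c * t) ≠ 0 := by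
      have heq2 : 1 - 2 / 3 * c * t = c * (1 / c - 2 / 3 * t) := by
        field_simp
      rw [heq2]
      positivity
    have heq : c / (1 - 2 / 3 * c * t) = (1 / c - 2 / 3 * t)⁻¹ := by
      have hd' : (1 / c - 2 / 3 * t) ≠ 0 := ne_of_gt hd
      field_simp
    rw [ge_iff_le, heq]
    exact hle
  · intro M hM
    by_contra hcon
    push_neg at hcon
    have ht0 : 0 ≤ 3 / (2 * c) := by positivity
    obtain ⟨h1, h2⟩ := master (3 / (2 * c)) ht0 hcon
    have heq : (2 : ℝ) / 3 * (3 / (2 * c)) = 1 / c := by field_simp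
    have hpos : 0 < (f (3 / (2 * c)))⁻¹ := inv_pos.2 (lt_of_lt_of_le hc h1)
    linarith
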